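/- (Tarama estimate.) Let c : [a,b] → ℝ be of class C² with c(t) ≥ Λ1 > 0, |c'(t)| ≤ γ(t) and |c''(t)| ≤ γ(t)² for all t ∈ [a,b], where γ is a continuous non-negative function, and let λ > 0 satisfy λ ≥ (1/2)|c'(t)|/c(t)^{3/2} for every t ∈ [a,b]. Then for every solution u of u''(t) + λ² c(t) u(t) = 0 on [a,b], the Tarama energy E_Tar(t) = u'(t)²/c(t)^{1/2} + λ² c(t)^{1/2} u(t)² + (1/2)(c'(t)/c(t)^{3/2}) u'(t) u(t) satisfies E_Tar(b) ≤ E_Tar(a)·exp( ((2Λ1+3)/(4Λ1^{5/2}))·(1/λ)·∫_a^b γ(τ)² dτ ). -/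

import Mathlib

/-!
Along a solution the `λ²`-terms of `E_Tar'` cancel, leaving
`E_Tar' = (1/2)(c''/c^{3/2} - (3/2)c'²/c^{5/2}) u'u`, whose coefficient is at most
`(2Λ1+3)/(4Λ1^{5/2}) γ²` in absolute value. By AM-GM the first two terms of `E_Tar` dominate
`2λ|u'u|`, and the hypothesis on `λ` bounds the cross term by `λ|u'u|`, so `λ|u'u| ≤ E_Tar`.
Hence `E_Tar' ≤ (2Λ1+3)/(4Λ1^{5/2}) (1/λ) γ² E_Tar`, and Gronwall's inequality concludes.
-/

open Real Set MeasureTheory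

/-- The Tarama energy
`E_Tar(t) = u'(t)²/c(t)^{1/2} + λ² c(t)^{1/2} u(t)² + (1/2)(c'(t)/c(t)^{3/2}) u'(t) u(t)`. -/
noncomputable def tarE (c c' : ℝ → ℝ) (lam : ℝ) (u u' : ℝ → ℝ) (t : ℝ) : ℝ :=
  (u' t) ^ 2 / Real.sqrt (c t) + lam ^ 2 * Real.sqrt (c t) * (u t) ^ 2 +
    (1 / 2) * (c' t / (c t) ^ ((3 : ℝ) / 2)) * u' t * u t

theorem le_mul_exp_integral_of_hasDerivWithinAt_le_mul {f f' g : ℝ → ℝ} {a b : ℝ} (hab : a ≤ b)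
    (hg : ContinuousOn g (Icc a b))
    (hf : ∀ t ∈ Icc a b, HasDerivWithinAt f (f' t) (Icc a b) t)
    (hf' : ∀ t ∈ Icc a b, f' t ≤ g t * f t) :
    f b ≤ f a * exp (∫ τ in a..b, g τ) := by
  set G := fun t => ∫ τ in a..t, g τ
  have hG : ∀ t ∈ Icc a b, HasDerivWithinAt G (g t) (Icc a b) t := fun t ht =>
    have : Fact (t ∈ Icc a b) := ⟨ht⟩
    intervalIntegral.integral_hasDerivWithinAt_right
      ((hg.mono (Icc_subset_Icc le_rfl ht.2)).intervalIntegrable_of_Icc ht.1)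
      (hg.stronglyMeasurableAtFilter_nhdsWithin measurableSet_Icc t) (hg t ht)
  have hF : ∀ t ∈ Icc a b, HasDerivWithinAt (fun t => f t * exp (-G t))
      ((f' t - g t * f t) * exp (-G t)) (Icc a b) t := fun t ht =>
    ((hf t ht).mul (hG t ht).neg.exp).congr_deriv (by simp only [Pi.neg_apply]; ring)
  have hanti : AntitoneOn (fun t => f t * exp (-G t)) (Icc a b) :=
    antitoneOn_of_hasDerivWithinAt_nonpos (convex_Icc a b)
      (fun t ht => (hF t ht).continuousWithinAt)
      (fun t ht => (hF t (interior_subset ht)).mono interior_subset)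
      (fun t ht => mul_nonpos_of_nonpos_of_nonneg (sub_nonpos.2 (hf' t (interior_subset ht)))
        (exp_pos _).le)
  have hba := hanti (left_mem_Icc.2 hab) (right_mem_Icc.2 hab) hab
  simp only [G, intervalIntegral.integral_same, neg_zero, exp_zero, mul_one] at hba
  calc f b = f b * exp (-G b) * exp (G b) := by rw [mul_assoc, ← exp_add]; simp
    _ ≤ f a * exp (G b) := by gcongr

theorem two_mul_abs_mul_le_div_add_mul (p q lam : ℝ) {s : ℝ} (hs : 0 < s) :
    2 * lam * |p * q| ≤ p ^ 2 / s + lam ^ 2 * s * q ^ 2 := by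
  rw [div_add' _ _ _ hs.ne', le_div_iff₀ hs, abs_mul, ← sq_abs p, ← sq_abs q]
  nlinarith [sq_nonneg (|p| - lam * s * |q|)]

noncomputable def tarDerivCoeff (c c' c'' : ℝ → ℝ) (t : ℝ) : ℝ :=
  (1 / 2) * (c'' t / c t ^ ((3 : ℝ) / 2) - (3 / 2) * c' t ^ 2 / c t ^ ((5 : ℝ) / 2))

section Energy

variable {c c' c'' u u' : ℝ → ℝ} {lam t : ℝ}

theorem hasDerivWithinAt_tarE {s : Set ℝ} (hct : 0 < c t) (hc : HasDerivWithinAt c (c' t) s t)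
    (hc' : HasDerivWithinAt c' (c'' t) s t) (hu : HasDerivWithinAt u (u' t) s t)
    (hu' : HasDerivWithinAt u' (-(lam ^ 2 * c t * u t)) s t) :
    HasDerivWithinAt (tarE c c' lam u u') (tarDerivCoeff c c' c'' t * (u' t * u t)) s t := by
  have hsqrt := hc.sqrt hct.ne'
  have hpow := hc.rpow_const (p := 3 / 2) (Or.inl hct.ne')
  have h := (((hu'.pow 2).div hsqrt (sqrt_pos.2 hct).ne').add
    ((hsqrt.const_mul (lam ^ 2)).mul (hu.pow 2))).add
    ((((hc'.div hpow (rpow_pos_of_pos hct _).ne').const_mul (1 / 2)).mul hu').mul hu)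
  refine h.congr_deriv ?_
  simp only [tarDerivCoeff, Pi.pow_apply, Pi.mul_apply, Pi.div_apply]
  rw [show (3 : ℝ) / 2 - 1 = 1 / 2 by norm_num, ← sqrt_eq_rpow, rpow_div_two_eq_sqrt _ hct.le,
    rpow_div_two_eq_sqrt _ hct.le, rpow_ofNat, rpow_ofNat]
  have hS : c t = √(c t) ^ 2 := (sq_sqrt hct.le).symm
  have hS0 := (sqrt_pos.2 hct).ne'
  generalize √(c t) = S at *
  rw [hS]
  field_simp
  ring

theorem abs_tarDerivCoeff_le {γ : ℝ → ℝ} {Λ : ℝ} (hΛ : 0 < Λ) (hc : Λ ≤ c t)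
    (hc' : |c' t| ≤ γ t) (hc'' : |c'' t| ≤ γ t ^ 2) :
    |tarDerivCoeff c c' c'' t| ≤ (2 * Λ + 3) / (4 * Λ ^ ((5 : ℝ) / 2)) * γ t ^ 2 := by
  have hct : 0 < c t := hΛ.trans_le hc
  have hc'_sq : c' t ^ 2 ≤ γ t ^ 2 := by
    rw [← sq_abs]; exact pow_le_pow_left₀ (abs_nonneg _) hc' 2
  calc |tarDerivCoeff c c' c'' t|
      ≤ (1 / 2) * (|c'' t| / c t ^ ((3 : ℝ) / 2) + (3 / 2) * c' t ^ 2 / c t ^ ((5 : ℝ) / 2)) := by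
        rw [tarDerivCoeff, abs_mul, abs_of_pos (by norm_num : (0 : ℝ) < 1 / 2)]
        gcongr
        refine (abs_sub _ _).trans_eq ?_
        rw [abs_div, abs_of_pos (by positivity : 0 < c t ^ ((3 : ℝ) / 2)),
          abs_of_nonneg (by positivity : 0 ≤ 3 / 2 * c' t ^ 2 / c t ^ ((5 : ℝ) / 2))]
    _ ≤ (1 / 2) * (γ t ^ 2 / Λ ^ ((3 : ℝ) / 2) + (3 / 2) * γ t ^ 2 / Λ ^ ((5 : ℝ) / 2)) := by
        gcongr
    _ = (2 * Λ + 3) / (4 * Λ ^ ((5 : ℝ) / 2)) * γ t ^ 2 := by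
        rw [show (5 : ℝ) / 2 = 1 + 3 / 2 by norm_num, rpow_add hΛ, rpow_one]
        have : 0 < Λ ^ ((3 : ℝ) / 2) := by positivity
        field_simp
        ring

theorem mul_abs_mul_le_tarE (hct : 0 < c t)
    (hlam : (1 / 2) * |c' t| / c t ^ ((3 : ℝ) / 2) ≤ lam) :
    lam * |u' t * u t| ≤ tarE c c' lam u u' t := by
  have hcross : |(1 / 2) * (c' t / c t ^ ((3 : ℝ) / 2)) * u' t * u t| ≤ lam * |u' t * u t| := by
    rw [mul_assoc, abs_mul, abs_mul, abs_of_pos (by norm_num : (0 : ℝ) < 1 / 2), abs_div,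
      abs_of_pos (rpow_pos_of_pos hct _), ← mul_div_assoc]
    exact mul_le_mul_of_nonneg_right hlam (abs_nonneg _)
  have := two_mul_abs_mul_le_div_add_mul (u' t) (u t) lam (sqrt_pos.2 hct)
  unfold tarE
  linarith [neg_abs_le ((1 / 2) * (c' t / c t ^ ((3 : ℝ) / 2)) * u' t * u t)]

end Energy

theorem tarama_estimate_general
    (a b Λ1 lam : ℝ) (hab : a ≤ b) (hΛ1 : 0 < Λ1) (hlam : 0 < lam)
    (c c' c'' γ : ℝ → ℝ)
    (hc1 : ∀ t ∈ Icc a b, HasDerivWithinAt c (c' t) (Icc a b) t)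
    (hc2 : ∀ t ∈ Icc a b, HasDerivWithinAt c' (c'' t) (Icc a b) t)
    (hγ_cont : ContinuousOn γ (Icc a b))
    (hc_lb : ∀ t ∈ Icc a b, Λ1 ≤ c t)
    (hder : ∀ t ∈ Icc a b, |c' t| ≤ γ t ∧ |c'' t| ≤ (γ t) ^ 2)
    (hlam_ge : ∀ t ∈ Icc a b, (1 / 2) * |c' t| / (c t) ^ ((3 : ℝ) / 2) ≤ lam)
    (u u' : ℝ → ℝ)
    (hu : ∀ t ∈ Icc a b, HasDerivWithinAt u (u' t) (Icc a b) t)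
    (hu' : ∀ t ∈ Icc a b, HasDerivWithinAt u' (-(lam ^ 2 * c t * u t)) (Icc a b) t) :
    tarE c c' lam u u' b ≤
      tarE c c' lam u u' a *
        Real.exp ((2 * Λ1 + 3) / (4 * Λ1 ^ ((5 : ℝ) / 2)) * (1 / lam) *
          ∫ τ in a..b, (γ τ) ^ 2) := by
  set K := (2 * Λ1 + 3) / (4 * Λ1 ^ ((5 : ℝ) / 2)) * (1 / lam)
  have hc_pos : ∀ t ∈ Icc a b, 0 < c t := fun t ht => hΛ1.trans_le (hc_lb t ht)
  have hderiv_le : ∀ t ∈ Icc a b,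
      tarDerivCoeff c c' c'' t * (u' t * u t) ≤ K * γ t ^ 2 * tarE c c' lam u u' t := by
    intro t ht
    calc _ ≤ |tarDerivCoeff c c' c'' t| * |u' t * u t| := by
          rw [← abs_mul]; exact le_abs_self _
      _ ≤ (2 * Λ1 + 3) / (4 * Λ1 ^ ((5 : ℝ) / 2)) * γ t ^ 2 * |u' t * u t| := by
          gcongr
          exact abs_tarDerivCoeff_le hΛ1 (hc_lb t ht) (hder t ht).1 (hder t ht).2
      _ = K * γ t ^ 2 * (lam * |u' t * u t|) := by
          simp only [K]; field_simp
      _ ≤ K * γ t ^ 2 * tarE c c' lam u u' t := by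
          gcongr
          exact mul_abs_mul_le_tarE (hc_pos t ht) (hlam_ge t ht)
  have h := le_mul_exp_integral_of_hasDerivWithinAt_le_mul hab ((hγ_cont.pow 2).const_mul K)
    (fun t ht => hasDerivWithinAt_tarE (hc_pos t ht) (hc1 t ht) (hc2 t ht) (hu t ht) (hu' t ht))
    hderiv_le
  rwa [intervalIntegral.integral_const_mul] at h

theorem tarama_estimate
    (a b Λ1 lam : ℝ) (hab : a ≤ b) (hΛ1 : 0 < Λ1) (hlam : 0 < lam)
    (c c' c'' γ : ℝ → ℝ)
    (hc1 : ∀ t ∈ Icc a b, HasDerivWithinAt c (c' t) (Icc a b) t)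
    (hc2 : ∀ t ∈ Icc a b, HasDerivWithinAt c' (c'' t) (Icc a b) t)
    (hc2cont : ContinuousOn c'' (Icc a b))
    (hγ_cont : ContinuousOn γ (Icc a b)) (hγ_nonneg : ∀ t ∈ Icc a b, 0 ≤ γ t)
    (hc_lb : ∀ t ∈ Icc a b, Λ1 ≤ c t)
    (hder : ∀ t ∈ Icc a b, |c' t| ≤ γ t ∧ |c'' t| ≤ (γ t) ^ 2)
    (hlam_ge : ∀ t ∈ Icc a b, (1 / 2) * |c' t| / (c t) ^ ((3 : ℝ) / 2) ≤ lam)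
    (u u' : ℝ → ℝ)
    (hu : ∀ t ∈ Icc a b, HasDerivWithinAt u (u' t) (Icc a b) t)
    (hu' : ∀ t ∈ Icc a b, HasDerivWithinAt u' (-(lam ^ 2 * c t * u t)) (Icc a b) t) :
    tarE c c' lam u u' b ≤
      tarE c c' lam u u' a *
        Real.exp ((2 * Λ1 + 3) / (4 * Λ1 ^ ((5 : ℝ) / 2)) * (1 / lam) *
          ∫ τ in a..b, (γ τ) ^ 2) :=
  tarama_estimate_general a b Λ1 lam hab hΛ1 hlam c c' c'' γ hc1 hc2 hγ_cont hc_lb hder hlam_ge u u'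
    hu hu'
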